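/- arXiv:1310.3685 — 4 statements merged into one kernel-verified Lean document; each statement's English description precedes it below -/
import Mathlib

section
/- Let H be a complex inner product space with operators ∂, ∂̄ and adjoints ∂*, ∂̄*, and suppose H = K ⊕ (Im ∂ + Im ∂̄) ⊕ Im(∂∂̄)* is an orthogonal decomposition where K := ker(∂∂̄) ∩ ker ∂* ∩ ker ∂̄*. Then ker ∂* ∩ ker ∂̄* = K ⊕ Im(∂∂̄)*. -/
/-! `ker ∂* ∩ ker ∂̄*` is the orthogonal complement of `Im ∂ + Im ∂̄`, and whenever
`H = A + B + C` with `B` orthogonal to `A` and to `C`, the orthogonal complement of the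
middle summand `B` is `A + C`. -/

open scoped InnerProductSpace

section

variable {𝕜 E F : Type*} [RCLike 𝕜] [NormedAddCommGroup E] [InnerProductSpace 𝕜 E]
  [NormedAddCommGroup F] [InnerProductSpace 𝕜 F]

theorem LinearMap.orthogonal_range_eq_ker_of_inner_map_eq {T : E →ₗ[𝕜] F} {S : F →ₗ[𝕜] E}
    (hTS : ∀ x y, ⟪T x, y⟫_𝕜 = ⟪x, S y⟫_𝕜) : (LinearMap.range T)ᗮ = LinearMap.ker S := by
  ext y
  simp only [Submodule.mem_orthogonal, LinearMap.mem_range, forall_exists_index,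
    forall_apply_eq_imp_iff, hTS, LinearMap.mem_ker]
  exact ⟨fun h => inner_self_eq_zero.1 (h (S y)), fun h x => by rw [h, inner_zero_right]⟩

/-- Modular law: `A ⊔ C ≤ Bᗮ`, so `Bᗮ = Bᗮ ⊓ (A ⊔ C ⊔ B) = A ⊔ C ⊔ (B ⊓ Bᗮ)`. -/
theorem Submodule.orthogonal_eq_sup_of_sup_eq_top {A B C : Submodule 𝕜 E}
    (htop : A ⊔ B ⊔ C = ⊤) (hAB : A ⟂ B) (hBC : B ⟂ C) : Bᗮ = A ⊔ C := by
  have hle : A ⊔ C ≤ Bᗮ := sup_le hAB.le hBC.symm.le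
  calc Bᗮ = (A ⊔ C ⊔ B) ⊓ Bᗮ := by rw [sup_right_comm, htop, top_inf_eq]
    _ = A ⊔ C ⊔ B ⊓ Bᗮ := sup_inf_assoc_of_le B hle
    _ = A ⊔ C := by rw [B.inf_orthogonal_eq_bot, sup_bot_eq]

end

theorem aeppli_three_space_general
    {H : Type*} [NormedAddCommGroup H] [InnerProductSpace ℂ H]
    (p q ps qs pqs : H →ₗ[ℂ] H)
    (hps : ∀ x y, (inner ℂ (p x) y : ℂ) = inner ℂ x (ps y))
    (hqs : ∀ x y, (inner ℂ (q x) y : ℂ) = inner ℂ x (qs y))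
    (K : Submodule ℂ H)
    -- H = K ⊕ (Im ∂ + Im ∂̄) ⊕ Im(∂∂̄)* ...
    (hdecomp : K ⊔ (LinearMap.range p ⊔ LinearMap.range q) ⊔ LinearMap.range pqs = ⊤)
    -- ... and the decomposition is orthogonal
    (h12 : ∀ x ∈ K, ∀ y ∈ LinearMap.range p ⊔ LinearMap.range q, (inner ℂ x y : ℂ) = 0)
    (h23 : ∀ x ∈ LinearMap.range p ⊔ LinearMap.range q, ∀ y ∈ LinearMap.range pqs,
      (inner ℂ x y : ℂ) = 0) :
    LinearMap.ker ps ⊓ LinearMap.ker qs = K ⊔ LinearMap.range pqs := by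
  rw [← LinearMap.orthogonal_range_eq_ker_of_inner_map_eq hps,
    ← LinearMap.orthogonal_range_eq_ker_of_inner_map_eq hqs, Submodule.inf_orthogonal]
  exact Submodule.orthogonal_eq_sup_of_sup_eq_top hdecomp
    (Submodule.isOrtho_iff_inner_eq.2 h12) (Submodule.isOrtho_iff_inner_eq.2 h23)

/-- Let H be a complex inner product space with operators ∂, ∂̄ and
adjoints ∂*, ∂̄*, and suppose H = K ⊕ (Im ∂ + Im ∂̄) ⊕ Im(∂∂̄)* is an orthogonal
decomposition where K := ker(∂∂̄) ∩ ker ∂* ∩ ker ∂̄*. Then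
ker ∂* ∩ ker ∂̄* = K ⊕ Im(∂∂̄)*. Here `p, q, ps, qs, pqs` stand for ∂, ∂̄, ∂*, ∂̄*,
(∂∂̄)* respectively. -/
theorem aeppli_three_space
    {H : Type*} [NormedAddCommGroup H] [InnerProductSpace ℂ H]
    (p q ps qs pqs : H →ₗ[ℂ] H)
    (hps : ∀ x y, (inner ℂ (p x) y : ℂ) = inner ℂ x (ps y))
    (hqs : ∀ x y, (inner ℂ (q x) y : ℂ) = inner ℂ x (qs y))
    (hpqs : ∀ x y, (inner ℂ (p (q x)) y : ℂ) = inner ℂ x (pqs y))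
    (K : Submodule ℂ H)
    (hK : K = LinearMap.ker (p ∘ₗ q) ⊓ LinearMap.ker ps ⊓ LinearMap.ker qs)
    -- H = K ⊕ (Im ∂ + Im ∂̄) ⊕ Im(∂∂̄)* ...
    (hdecomp : K ⊔ (LinearMap.range p ⊔ LinearMap.range q) ⊔ LinearMap.range pqs = ⊤)
    -- ... and the decomposition is orthogonal
    (h12 : ∀ x ∈ K, ∀ y ∈ LinearMap.range p ⊔ LinearMap.range q, (inner ℂ x y : ℂ) = 0)
    (h13 : ∀ x ∈ K, ∀ y ∈ LinearMap.range pqs, (inner ℂ x y : ℂ) = 0)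
    (h23 : ∀ x ∈ LinearMap.range p ⊔ LinearMap.range q, ∀ y ∈ LinearMap.range pqs,
      (inner ℂ x y : ℂ) = 0) :
    LinearMap.ker ps ⊓ LinearMap.ker qs = K ⊔ LinearMap.range pqs :=
  aeppli_three_space_general p q ps qs pqs hps hqs K hdecomp h12 h23
end

section
/- Let X be a compact complex manifold satisfying the ∂∂̄-lemma. Then every Aeppli cohomology class of type (p,q) contains a d-closed representative: for any smooth (p,q)-form α with ∂∂̄α = 0, there exist a (p-1,q)-form β and a (p,q-1)-form γ such that d(α + ∂β + ∂̄γ) = 0. -/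
/-- Let X be a compact complex manifold satisfying the ∂∂̄-lemma. Then
every Aeppli cohomology class of type (p,q) contains a d-closed representative: for any
smooth (p,q)-form α with ∂∂̄α = 0, there exist a (p-1,q)-form β and a (p,q-1)-form γ
such that d(α + ∂β + ∂̄γ) = 0. The smooth forms are modelled by a complex vector space
`F` with operators `p = ∂`, `q = ∂̄` and a pure-type predicate `Pure` preserved by ∂
and ∂̄; the ∂∂̄-lemma is the hypothesis that for every d-closed pure-type form the four
kinds of exactness are equivalent. -/
theorem aeppli_class_has_d_closed_representative
    {F : Type*} [AddCommGroup F] [Module ℂ F]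
    (p q : F →ₗ[ℂ] F)
    (Pure : F → Prop)
    (hp2 : ∀ x, p (p x) = 0) (hq2 : ∀ x, q (q x) = 0)
    (hanti : ∀ x, p (q x) = - q (p x))
    (hPure_p : ∀ x, Pure x → Pure (p x)) (hPure_q : ∀ x, Pure x → Pure (q x))
    -- the ∂∂̄-lemma on X
    (hlemma : ∀ u, Pure u → p u = 0 → q u = 0 →
      (((∃ v, u = p v + q v) ↔ (∃ v, u = p v)) ∧
       ((∃ v, u = p v) ↔ (∃ v, u = q v)) ∧
       ((∃ v, u = q v) ↔ (∃ v, u = p (q v)))))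
    (α : F) (hαPure : Pure α) (hα : p (q α) = 0) :
    ∃ β γ, p (α + p β + q γ) + q (α + p β + q γ) = 0 := by
  -- ∂α is d-closed pure and ∂-exact, hence ∂∂̄-exact
  have hqpα : q (p α) = 0 := by
    have h := hanti α
    rw [hα] at h
    exact (neg_eq_zero.mp h.symm)
  obtain ⟨h1, h2, h3⟩ := hlemma (p α) (hPure_p α hαPure) (hp2 α) hqpα
  obtain ⟨v, hv⟩ : ∃ v, p α = p (q v) := h3.mp (h2.mp ⟨α, rfl⟩)
  -- ∂̄α is d-closed pure and ∂̄-exact, hence ∂∂̄-exact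
  obtain ⟨h1', h2', h3'⟩ := hlemma (q α) (hPure_q α hαPure) hα (hq2 α)
  obtain ⟨w, hw⟩ : ∃ w, q α = p (q w) := h3'.mp ⟨α, rfl⟩
  refine ⟨w, -v, ?_⟩
  have e1 : p (α + p w + q (-v)) = 0 := by
    simp only [map_add, map_neg, hp2 w, add_zero]
    rw [← hv]; abel
  have e2 : q (α + p w + q (-v)) = 0 := by
    simp [map_add, hq2]
    have : q (p w) = - p (q w) := by
      have h := hanti w; rw [h]; simp
    rw [this, ← hw]
    abel
  rw [e1, e2, add_zero]
end

section
/- Let X be a compact ∂∂̄-manifold. The map T^{p,q}: H_A^{p,q}(X,ℂ) → H^{p+q}_{DR}(X,ℂ) sending an Aeppli class to the De Rham class of any of its d-closed representatives is well defined and injective: (1) if α̃ and β̃ are d-closed (p,q)-forms with α̃ - β̃ = ∂u + ∂̄v, then α̃ - β̃ is d-exact; (2) if α is a d-closed (p,q)-form that is d-exact, then α ∈ Im ∂ + Im ∂̄. -/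
/-- Let X be a compact ∂∂̄-manifold. The map
T^{p,q}: H_A^{p,q}(X,ℂ) → H^{p+q}_{DR}(X,ℂ) sending an Aeppli class to the De Rham class
of any of its d-closed representatives is well defined and injective:
(1) if α̃ and β̃ are d-closed (p,q)-forms with α̃ - β̃ = ∂u + ∂̄v, then α̃ - β̃ is
d-exact; (2) if α is a d-closed (p,q)-form that is d-exact, then α ∈ Im ∂ + Im ∂̄.
The smooth forms are modelled by a complex vector space `F` with operators `p = ∂`,
`q = ∂̄` and a pure-type predicate `Pure`; the ∂∂̄-lemma is a hypothesis. -/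
theorem aeppli_to_deRham_well_defined_and_injective
    {F : Type*} [AddCommGroup F] [Module ℂ F]
    (p q : F →ₗ[ℂ] F)
    (Pure : F → Prop)
    (hp2 : ∀ x, p (p x) = 0) (hq2 : ∀ x, q (q x) = 0)
    (hanti : ∀ x, p (q x) = - q (p x))
    (hPure_p : ∀ x, Pure x → Pure (p x)) (hPure_q : ∀ x, Pure x → Pure (q x))
    -- the ∂∂̄-lemma on X
    (hlemma : ∀ w, Pure w → p w = 0 → q w = 0 →
      (((∃ v, w = p v + q v) ↔ (∃ v, w = p v)) ∧
       ((∃ v, w = p v) ↔ (∃ v, w = q v)) ∧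
       ((∃ v, w = q v) ↔ (∃ v, w = p (q v))))) :
    -- (1) well-definedness
    (∀ α' β' u v : F, Pure u → Pure v →
      p α' = 0 → q α' = 0 → p β' = 0 → q β' = 0 → α' - β' = p u + q v →
      ∃ w, α' - β' = p w + q w) ∧
    -- (2) injectivity
    (∀ α : F, Pure α → p α = 0 → q α = 0 → (∃ w, α = p w + q w) →
      ∃ u v, α = p u + q v) := by
  constructor
  · intro α' β' u v hu hv hpα hqα hpβ hqβ heq
    -- q (p u) = 0 and p (q v) = 0 from d-closedness
    have hd : p (α' - β') = 0 ∧ q (α' - β') = 0 := by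
      constructor <;> simp [map_sub, hpα, hqα, hpβ, hqβ]
    have hqpu : q (p u) = 0 := by
      have h := hd.2
      rw [heq] at h
      simpa [map_add, hq2 v] using h
    have hpqv : p (q v) = 0 := by
      have h := hd.1
      rw [heq] at h
      have : p (p u) + p (q v) = 0 := by simpa [map_add] using h
      simpa [hp2 u] using this
    -- apply the lemma to p u
    obtain ⟨h1u, h2u, h3u⟩ := hlemma (p u) (hPure_p u hu) (hp2 u) hqpu
    obtain ⟨a, ha⟩ : ∃ a, p u = p (q a) := h3u.1 (h2u.1 ⟨u, rfl⟩)
    -- apply the lemma to q v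
    obtain ⟨h1v, h2v, h3v⟩ := hlemma (q v) (hPure_q v hv) hpqv (hq2 v)
    obtain ⟨b, hb⟩ : ∃ b, q v = p (q b) := h3v.1 ⟨v, rfl⟩
    refine ⟨q (a + b), ?_⟩
    rw [heq, ha, hb]
    simp [map_add, hq2]
  · intro α _ _ _ ⟨w, hw⟩
    exact ⟨w, w, hw⟩
end

section
/- Let X be a compact complex manifold of dimension n carrying a d-exact smooth positive definite (n-1,n-1)-form Ω (a degenerate balanced structure). Then there exists no nonzero d-closed positive (1,1)-current T ≥ 0 on X. -/
/-- Let X be a compact complex manifold of dimension n carrying a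
d-exact smooth positive definite (n-1,n-1)-form Ω (a degenerate balanced structure).
Then there exists no nonzero d-closed positive (1,1)-current T ≥ 0 on X.
The smooth forms are modelled by a real vector space `F` and the (1,1)-currents by a
real vector space `Cur`, with `pair T Γ = ∫_X T∧Γ`; `Pos` (resp. `PosDef`) is the cone
of positive (resp. positive definite) smooth (n-1,n-1)-forms, a current T is positive
iff it pairs ≥ 0 with every positive form, `Closed` is d-closedness of currents; Stokes'
theorem and strict positivity of the pairing of a nonzero positive current against a
positive definite form are taken as hypotheses. -/
theorem degenerate_balanced_no_closed_positive_current
    {F Cur : Type*} [AddCommGroup F] [Module ℝ F] [AddCommGroup Cur] [Module ℝ Cur]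
    (pair : Cur →ₗ[ℝ] F →ₗ[ℝ] ℝ)          -- (T, Γ) ↦ ∫_X T ∧ Γ
    (d : F →ₗ[ℝ] F)                       -- exterior derivative
    (Closed : Cur → Prop) (Pos PosDef : F → Prop)
    -- Stokes: a closed current pairs to zero with every exact form
    (hStokes : ∀ T, Closed T → ∀ η, pair T (d η) = 0)
    -- a nonzero positive current pairs strictly positively with a positive definite form
    (hposdef : ∀ T : Cur, (∀ Γ, Pos Γ → 0 ≤ pair T Γ) → T ≠ 0 →
      ∀ Φ, PosDef Φ → 0 < pair T Φ)
    -- a degenerate balanced structure: a d-exact positive definite (n-1,n-1)-form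
    (Ω : F) (hΩ : PosDef Ω) (η : F) (hexact : Ω = d η) :
    ¬ ∃ T : Cur, Closed T ∧ (∀ Γ, Pos Γ → 0 ≤ pair T Γ) ∧ T ≠ 0 := by
  rintro ⟨T, hc, hp, hne⟩
  have := hposdef T hp hne Ω hΩ
  rw [hexact, hStokes T hc η] at this
  exact lt_irrefl 0 this
end
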